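/- Let n ≥ 1 be an integer and let V ∈ L¹(ℝⁿ;ℝ) ∩ L²(ℝⁿ;ℝ). Suppose there is a constant C such that for all 0 < t ≤ 1: ∫_0^1 ∫_{ℝⁿ} ((1 − e^{−t v(1−v)|ξ|²}) / t) |V̂(ξ)|² dξ dv ≤ C. Then ∫_{ℝⁿ} |ξ|² |V̂(ξ)|² dξ ≤ 6C. -/

import Mathlib

/-!
As `t → 0⁺`, `(1 - e^{-t v(1-v)|ξ|²}) / t` tends to `v(1-v)|ξ|²`. Viewing the double integral
as one integral over `(0,1) × ℝⁿ`, Fatou's lemma along `t = 1/(k+1)` bounds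
`∫∫ v(1-v)|ξ|² |V̂(ξ)|²` by `C`, and this integral splits as `(∫₀¹ v(1-v) dv) · ∫ |ξ|² |V̂(ξ)|²`
with `∫₀¹ v(1-v) dv = 1/6`.
-/

open MeasureTheory Real Filter Topology

/-- The Fourier transform `V̂(ξ) = ∫ e^{-i⟨x,ξ⟩} V(x) dx`. -/
noncomputable def fourierV (n : ℕ) (V : EuclideanSpace ℝ (Fin n) → ℝ)
    (ξ : EuclideanSpace ℝ (Fin n)) : ℂ :=
  ∫ x, Complex.exp (-Complex.I * ((inner ℝ x ξ : ℝ) : ℂ)) * (V x : ℂ)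

theorem continuous_fourierV {n : ℕ} {V : EuclideanSpace ℝ (Fin n) → ℝ} (hV : Integrable V) :
    Continuous (fourierV n V) := by
  refine continuous_of_dominated (bound := fun x => |V x|) (fun ξ => ?_) (fun ξ => ?_) hV.abs
    (Eventually.of_forall fun x => by fun_prop)
  · exact (Continuous.aestronglyMeasurable (by fun_prop)).mul
      (Complex.continuous_ofReal.comp_aestronglyMeasurable hV.1)
  · filter_upwards with x
    simp [Complex.norm_exp]

theorem tendsto_one_sub_exp_neg_mul_div (c : ℝ) :
    Tendsto (fun t => (1 - exp (-t * c)) / t) (𝓝[≠] 0) (𝓝 c) := by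
  have hd : HasDerivAt (fun s => 1 - exp (-s * c)) c 0 := by
    simpa using ((hasDerivAt_neg 0).mul_const c).exp.const_sub 1
  simpa [div_eq_inv_mul] using hasDerivAt_iff_tendsto_slope_zero.mp hd

theorem tendsto_one_sub_exp_neg_mul_div_nat (c : ℝ) :
    Tendsto (fun k : ℕ => (1 - exp (-(1 / (k + 1)) * c)) / (1 / (k + 1))) atTop (𝓝 c) :=
  (tendsto_one_sub_exp_neg_mul_div c).comp <|
    tendsto_nhdsWithin_of_tendsto_nhds_of_eventually_within _
      tendsto_one_div_add_atTop_nhds_zero_nat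
      (Eventually.of_forall fun _ => Nat.one_div_pos_of_nat.ne')

theorem lintegral_Ioo_mul_one_sub :
    ∫⁻ v in Set.Ioo (0 : ℝ) 1, ENNReal.ofReal (v * (1 - v)) = ENNReal.ofReal 6⁻¹ := by
  rw [← ofReal_integral_eq_lintegral_ofReal]
  · rw [← integral_Ioc_eq_integral_Ioo, ← intervalIntegral.integral_of_le zero_le_one]
    have h : ∀ x : ℝ, x * (1 - x) = x - x ^ 2 := fun x => by ring
    simp only [h]
    rw [intervalIntegral.integral_sub intervalIntegral.intervalIntegrable_id
      ((continuous_pow 2).intervalIntegrable 0 1), integral_id, integral_pow]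
    norm_num
  · exact (Continuous.integrableOn_Icc (by fun_prop)).mono_set Set.Ioo_subset_Icc_self
  · filter_upwards [ae_restrict_mem measurableSet_Ioo] with v hv
    exact mul_nonneg hv.1.le (sub_nonneg.2 hv.2.le)

theorem lintegral_le_of_tendsto {α ι : Type*} [MeasurableSpace α] {μ : Measure α} {u : Filter ι}
    [u.IsCountablyGenerated] [u.NeBot] {f : ι → α → ENNReal} {F : α → ENNReal} {c : ENNReal}
    (hf : ∀ i, AEMeasurable (f i) μ) (hlim : ∀ x, Tendsto (fun i => f i x) u (𝓝 (F x)))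
    (hbd : ∀ i, ∫⁻ x, f i x ∂μ ≤ c) :
    ∫⁻ x, F x ∂μ ≤ c :=
  calc ∫⁻ x, F x ∂μ = ∫⁻ x, liminf (fun i => f i x) u ∂μ :=
        lintegral_congr fun x => (hlim x).liminf_eq.symm
    _ ≤ liminf (fun i => ∫⁻ x, f i x ∂μ) u := lintegral_liminf_le' hf
    _ ≤ c := liminf_le_of_frequently_le' (Frequently.of_forall hbd)

theorem ENNReal.le_ofReal_mul_of_ofReal_inv_mul_le {a C : ℝ} {I : ENNReal} (ha : 0 < a)
    (h : ENNReal.ofReal a⁻¹ * I ≤ ENNReal.ofReal C) : I ≤ ENNReal.ofReal (a * C) :=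
  calc I = ENNReal.ofReal a * (ENNReal.ofReal a⁻¹ * I) := by
        rw [← mul_assoc, ← ENNReal.ofReal_mul ha.le, mul_inv_cancel₀ ha.ne', ENNReal.ofReal_one,
          one_mul]
    _ ≤ ENNReal.ofReal a * ENNReal.ofReal C := by gcongr
    _ = ENNReal.ofReal (a * C) := (ENNReal.ofReal_mul ha.le).symm

theorem statement11_general (n : ℕ) (V : EuclideanSpace ℝ (Fin n) → ℝ)
    (hV1 : Integrable V) (C : ℝ)
    (hbd : ∀ t : ℝ, 0 < t → t ≤ 1 →
      ∫⁻ v in Set.Ioo (0 : ℝ) 1, ∫⁻ ξ : EuclideanSpace ℝ (Fin n),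
          ENNReal.ofReal (((1 - Real.exp (-t * v * (1 - v) * ‖ξ‖ ^ 2)) / t) *
            ‖fourierV n V ξ‖ ^ 2) ≤ ENNReal.ofReal C) :
    ∫⁻ ξ : EuclideanSpace ℝ (Fin n),
        ENNReal.ofReal (‖ξ‖ ^ 2 * ‖fourierV n V ξ‖ ^ 2) ≤
      ENNReal.ofReal (6 * C) := by
  have hV := continuous_fourierV hV1
  set F : ℕ → ℝ × EuclideanSpace ℝ (Fin n) → ENNReal := fun k p =>
    ENNReal.ofReal (((1 - exp (-(1 / (k + 1)) * p.1 * (1 - p.1) * ‖p.2‖ ^ 2)) / (1 / (k + 1))) *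
      ‖fourierV n V p.2‖ ^ 2)
  have hF : ∀ k, Measurable (F k) := fun k =>
    Measurable.ennreal_ofReal (Continuous.measurable (by fun_prop (disch := positivity)))
  set μ := (volume.restrict (Set.Ioo (0 : ℝ) 1)).prod (volume : Measure (EuclideanSpace ℝ (Fin n)))
  have hFk : ∀ k, ∫⁻ p, F k p ∂μ ≤ ENNReal.ofReal C := fun k => by
    rw [lintegral_prod _ (hF k).aemeasurable]
    exact hbd _ Nat.one_div_pos_of_nat
      (by simpa using Nat.one_div_le_one_div (α := ℝ) (Nat.zero_le k))
  have hlim : ∀ p : ℝ × EuclideanSpace ℝ (Fin n), Tendsto (F · p) atTop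
      (𝓝 (ENNReal.ofReal (p.1 * (1 - p.1)) *
        ENNReal.ofReal (‖p.2‖ ^ 2 * ‖fourierV n V p.2‖ ^ 2))) := by
    intro p
    rw [← ENNReal.ofReal_mul' (by positivity), ← mul_assoc]
    refine (ENNReal.continuous_ofReal.tendsto _).comp <|
      ((tendsto_one_sub_exp_neg_mul_div_nat _).mul_const _).congr fun k => ?_
    simp only [neg_mul, mul_assoc]
  have hFatou : ENNReal.ofReal 6⁻¹ *
      ∫⁻ ξ, ENNReal.ofReal (‖ξ‖ ^ 2 * ‖fourierV n V ξ‖ ^ 2) ≤ ENNReal.ofReal C := by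
    rw [← lintegral_Ioo_mul_one_sub, ← lintegral_prod_mul (by fun_prop) (by fun_prop)]
    exact lintegral_le_of_tendsto (fun k => (hF k).aemeasurable) hlim hFk
  exact ENNReal.le_ofReal_mul_of_ofReal_inv_mul_le (by norm_num) hFatou

/-- if `V ∈ L¹ ∩ L²(ℝⁿ;ℝ)` and
`∫₀¹ ∫ ((1 - e^{-t v(1-v)|ξ|²})/t) |V̂(ξ)|² dξ dv ≤ C` for all `0 < t ≤ 1`, then
`∫ |ξ|² |V̂(ξ)|² dξ ≤ 6C`. -/
theorem statement11 (n : ℕ) (hn : 1 ≤ n) (V : EuclideanSpace ℝ (Fin n) → ℝ)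
    (hV1 : Integrable V) (hV2 : MemLp V 2 volume) (C : ℝ)
    (hbd : ∀ t : ℝ, 0 < t → t ≤ 1 →
      ∫⁻ v in Set.Ioo (0 : ℝ) 1, ∫⁻ ξ : EuclideanSpace ℝ (Fin n),
          ENNReal.ofReal (((1 - Real.exp (-t * v * (1 - v) * ‖ξ‖ ^ 2)) / t) *
            ‖fourierV n V ξ‖ ^ 2) ≤ ENNReal.ofReal C) :
    ∫⁻ ξ : EuclideanSpace ℝ (Fin n),
        ENNReal.ofReal (‖ξ‖ ^ 2 * ‖fourierV n V ξ‖ ^ 2) ≤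
      ENNReal.ofReal (6 * C) :=
  statement11_general n V hV1 C hbd
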